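/- Infinity-preservation of the simple abort-lifting gamma: define R^∞ = {σ₀ | ∃ infinite sequence σ₀, σ₁, σ₂, … with (σᵢ, σᵢ₊₁) ∈ R for all i}. For γ_N(N, E) = N ∪ (E × state) and γ_D(D, E) = D ∪ E, we have ((γ_N(N₁, E₁))* ∘ γ_D(D₂, E₂)) ∪ (γ_N(N₁, E₁))^∞ ⊆ γ_D((N₁* ∘ D₂) ∪ N₁^∞, N₁* ∘ (E₁ ∪ E₂)). -/

import Mathlib

/-- `R ∘ X` in the paper. -/
def relApp {σ : Type*} (R : Set (σ × σ)) (X : Set σ) : Set σ :=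
  {σ₁ | ∃ σ₂, (σ₁, σ₂) ∈ R ∧ σ₂ ∈ X}

def relStar {σ : Type*} (X : Set (σ × σ)) : Set (σ × σ) :=
  {p | Relation.ReflTransGen (fun a b => (a, b) ∈ X) p.1 p.2}

/-- `R^∞`: states from which there exists an infinite `R`-chain. -/
def relInf {σ : Type*} (R : Set (σ × σ)) : Set σ :=
  {σ₀ | ∃ f : ℕ → σ, f 0 = σ₀ ∧ ∀ i, (f i, f (i + 1)) ∈ R}

/-- `γ_N(N, E) = N ∪ (E × state)`. -/
def gammaN {σ : Type*} (N : Set (σ × σ)) (E : Set σ) : Set (σ × σ) :=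
  N ∪ {p | p.1 ∈ E}

/-- `γ_D(D, E) = D ∪ E`. -/
def gammaD {σ : Type*} (D E : Set σ) : Set σ := D ∪ E

section Abort

variable {σ : Type*} {N : Set (σ × σ)} {E : Set σ}

theorem mem_relStar_of_mem_relStar_gammaN {a b : σ} (h : (a, b) ∈ relStar (gammaN N E)) :
    (a, b) ∈ relStar N ∨ a ∈ relApp (relStar N) E := by
  change Relation.ReflTransGen _ a b at h
  induction h with
  | refl => exact Or.inl .refl
  | tail _ hstep ih =>
    rcases ih with hN | hE
    · rcases hstep with hstepN | hstepE
      · exact Or.inl (Relation.ReflTransGen.tail hN hstepN)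
      · exact Or.inr ⟨_, hN, hstepE⟩
    · exact Or.inr hE

theorem relApp_relStar_gammaN_subset (X : Set σ) :
    relApp (relStar (gammaN N E)) X ⊆ relApp (relStar N) X ∪ relApp (relStar N) E := by
  rintro a ⟨b, hab, hb⟩
  exact (mem_relStar_of_mem_relStar_gammaN hab).imp (fun h => ⟨b, h, hb⟩) id

/-- If `f 0 ∉ N* ∘ E`, no step of the chain can be an `E`-step, since its source is
`N*`-reachable from `f 0`; so the chain stays in `N`. -/
theorem relInf_gammaN_subset : relInf (gammaN N E) ⊆ relInf N ∪ relApp (relStar N) E := by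
  rintro _ ⟨f, rfl, hf⟩
  by_cases hE : f 0 ∈ relApp (relStar N) E
  · exact Or.inr hE
  have reach : ∀ i, (f 0, f i) ∈ relStar N ∧ (f i, f (i + 1)) ∈ N := by
    intro i
    induction i with
    | zero => exact ⟨.refl, (hf 0).resolve_right fun h => hE ⟨f 0, .refl, h⟩⟩
    | succ i ih =>
      have hreach : (f 0, f (i + 1)) ∈ relStar N := Relation.ReflTransGen.tail ih.1 ih.2
      exact ⟨hreach, (hf (i + 1)).resolve_right fun h => hE ⟨_, hreach, h⟩⟩
  exact Or.inl ⟨f, rfl, fun i => (reach i).2⟩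

theorem relApp_union (R : Set (σ × σ)) (X Y : Set σ) :
    relApp R (X ∪ Y) = relApp R X ∪ relApp R Y := by
  ext a
  simp only [relApp, Set.mem_union, Set.mem_ofPred_eq, and_or_left, exists_or]

end Abort

/-- Infinity-preservation of the simple abort-lifting gamma. -/
theorem gammaN_inf {state : Type*}
    (N₁ : Set (state × state)) (D₂ E₁ E₂ : Set state) :
    relApp (relStar (gammaN N₁ E₁)) (gammaD D₂ E₂) ∪ relInf (gammaN N₁ E₁) ⊆
      gammaD (relApp (relStar N₁) D₂ ∪ relInf N₁)
        (relApp (relStar N₁) (E₁ ∪ E₂)) := by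
  have hfin := relApp_relStar_gammaN_subset (N := N₁) (E := E₁) (gammaD D₂ E₂)
  have hinf := relInf_gammaN_subset (N := N₁) (E := E₁)
  simp only [gammaD, relApp_union] at hfin ⊢
  intro a ha
  rcases ha with ha | ha
  · rcases hfin ha with (h | h) | h <;> simp [h]
  · rcases hinf ha with h | h <;> simp [h]
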